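/- Let ν be a Borel measure on (0,1] with ∫ r² ν(dr) < ∞ satisfying Assumption (A) with index γ ∈ (1,2) and slowly varying function L. For integers 2 ≤ k ≤ b set α_{b,k} = C(b,k) ∫_{(0,1]} x^k (1−x)^{b−k} ν(dx), where C(b,k) is the binomial coefficient. Then for every fixed integer k ≥ 2, lim_{b→∞} α_{b,k} / (b^{γ} L(1/b)) = γ Γ(k−γ) / k!. -/

import Mathlib

/-!
Write `U t = ν [t, 1] = t ^ (-γ) * L t`. Integrating `x ^ k (1 - x) ^ (b - k)` by parts against `ν`
(the layer-cake formula) and using `C(b, k) (b - k) = (k + 1) C(b, k + 1)` gives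
`α_{b,k} = J_k(b) - J_{k+1}(b)` with `J_j(b) = j C(b, j) ∫₀¹ t ^ (j - 1) (1 - t) ^ (b - j) U t dt`.
After the substitution `t = s / b`,
`J_j(b) / U(1/b) = j C(b, j) b ^ (-j) ∫₀ᵇ s ^ (j - 1) (1 - s / b) ^ (b - j) U(s/b) / U(1/b) ds`.
The integrand tends to `s ^ (j - 1) e ^ (-s) s ^ (-γ)` by regular variation, and Potter's bound
`U(s/b) ≤ 2 ^ β s ^ (-β) U(1/b)` (`γ < β < j`, `s ≤ 1`) dominates it, so
`J_j(b) / U(1/b) → j / j! Γ(j - γ)`. Since `U(1/b) = b ^ γ L(1/b)`, the limit is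
`k / k! Γ(k - γ) - (k + 1) / (k + 1)! Γ(k + 1 - γ) = γ Γ(k - γ) / k!`.
-/

open MeasureTheory Filter Set Topology Real

-- Regular variation at `0⁺` with index `ρ`; index `0` is slow variation.
def RegularlyVaryingAtZero (U : ℝ → ℝ) (ρ : ℝ) : Prop :=
  ∀ s : ℝ, 0 < s → Tendsto (fun ε => U (s * ε) / U ε) (𝓝[>] 0) (𝓝 (s ^ ρ))

namespace RegularlyVaryingAtZero

variable {U V : ℝ → ℝ} {ρ : ℝ}

theorem congr (hU : RegularlyVaryingAtZero U ρ) (hUV : U =ᶠ[𝓝[>] 0] V) :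
    RegularlyVaryingAtZero V ρ := by
  intro s hs
  have hmul : Tendsto (fun ε => s * ε) (𝓝[>] 0) (𝓝[>] 0) := by
    refine tendsto_nhdsWithin_iff.2 ⟨?_, ?_⟩
    · simpa using tendsto_nhdsWithin_of_tendsto_nhds ((continuous_const_mul s).tendsto 0)
    · filter_upwards [self_mem_nhdsWithin] with ε (hε : 0 < ε)
      exact mul_pos hs hε
  refine (hU s hs).congr' ?_
  filter_upwards [hmul.eventually hUV, hUV] with ε h1 h2
  rw [h1, h2]

theorem rpow_mul (hU : RegularlyVaryingAtZero U ρ) (σ : ℝ) :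
    RegularlyVaryingAtZero (fun t => t ^ σ * U t) (σ + ρ) := by
  intro s hs
  rw [rpow_add hs]
  refine ((hU s hs).const_mul (s ^ σ)).congr' ?_
  filter_upwards [self_mem_nhdsWithin] with ε (hε : 0 < ε)
  rw [mul_rpow hs.le hε.le, mul_div_mul_comm, mul_div_cancel_right₀ _ (rpow_pos_of_pos hε σ).ne']

theorem of_eq_rpow_mul {L : ℝ → ℝ} {γ : ℝ}
    (hL : ∀ c : ℝ, 0 < c → Tendsto (fun ε => L (c * ε) / L ε) (𝓝[>] 0) (𝓝 1))
    (hU : ∀ t ∈ Ioc 0 1, U t = t ^ (-γ) * L t) : RegularlyVaryingAtZero U (-γ) := by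
  have hL0 : RegularlyVaryingAtZero L 0 := fun c hc => by simpa using hL c hc
  simpa using (hL0.rpow_mul (-γ)).congr (by
    filter_upwards [Ioc_mem_nhdsGT one_pos] with t ht using (hU t ht).symm)

end RegularlyVaryingAtZero

theorem le_rpow_mul_of_doubling {U : ℝ → ℝ} {β ε₀ : ℝ} (hβ : 0 ≤ β)
    (hanti : AntitoneOn U (Ioc 0 ε₀)) (hnn : ∀ ε ∈ Ioc 0 ε₀, 0 ≤ U ε)
    (hdbl : ∀ ε ∈ Ioc 0 ε₀, U (ε / 2) ≤ 2 ^ β * U ε) {ε s : ℝ} (hε : ε ∈ Ioc 0 ε₀)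
    (hs : s ∈ Ioc 0 1) :
    U (s * ε) ≤ 2 ^ β * s ^ (-β) * U ε := by
  obtain ⟨hε0, hεε₀⟩ := hε
  have hchain : ∀ n : ℕ, U (ε / 2 ^ n) ≤ (2 ^ β) ^ n * U ε := by
    intro n
    induction n with
    | zero => simp
    | succ n ih =>
      have hmem : ε / 2 ^ n ∈ Ioc 0 ε₀ :=
        ⟨by positivity, (div_le_self hε0.le (one_le_pow₀ one_le_two)).trans hεε₀⟩
      calc U (ε / 2 ^ (n + 1)) = U (ε / 2 ^ n / 2) := by rw [pow_succ, div_div]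
        _ ≤ 2 ^ β * U (ε / 2 ^ n) := hdbl _ hmem
        _ ≤ 2 ^ β * ((2 ^ β) ^ n * U ε) := by gcongr
        _ = (2 ^ β) ^ (n + 1) * U ε := by ring
  obtain ⟨n, hn, hn'⟩ := exists_nat_pow_near ((one_le_inv₀ hs.1).2 hs.2) one_lt_two
  have hle : ε / 2 ^ (n + 1) ≤ s * ε := by
    have := (inv_lt_iff_one_lt_mul₀' hs.1).1 hn'
    rw [div_le_iff₀ (by positivity)]
    nlinarith
  calc U (s * ε) ≤ U (ε / 2 ^ (n + 1)) :=
        hanti ⟨by positivity, hle.trans (by nlinarith [hs.2])⟩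
          ⟨by nlinarith [hs.1], by nlinarith [hs.2]⟩ hle
    _ ≤ (2 ^ β) ^ (n + 1) * U ε := hchain _
    _ = 2 ^ β * ((2 : ℝ) ^ n) ^ β * U ε := by
        rw [pow_succ', rpow_pow_comm zero_le_two]
    _ ≤ 2 ^ β * s ^ (-β) * U ε := by
        rw [rpow_neg hs.1.le, ← inv_rpow hs.1.le]
        gcongr
        exact hnn ε ⟨hε0, hεε₀⟩

theorem one_div_natCast_mem_Ioc {b : ℕ} (hb : 1 ≤ b) : 1 / (b : ℝ) ∈ Ioc 0 1 :=
  ⟨by positivity, (div_le_one (by positivity)).2 (by exact_mod_cast hb)⟩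

theorem tendsto_one_div_natCast_nhdsGT_zero :
    Tendsto (fun b : ℕ => 1 / (b : ℝ)) atTop (𝓝[>] 0) := by
  simpa only [one_div, Function.comp_def] using
    tendsto_inv_atTop_nhdsGT_zero.comp tendsto_natCast_atTop_atTop

theorem tendsto_one_sub_div_pow_sub (s : ℝ) (j : ℕ) :
    Tendsto (fun b : ℕ => (1 - s / b) ^ (b - j)) atTop (𝓝 (exp (-s))) := by
  have hbase : Tendsto (fun b : ℕ => 1 - s / b) atTop (𝓝 1) := by
    simpa using (tendsto_const_div_atTop_nhds_zero_nat s).const_sub 1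
  have hpow : Tendsto (fun b : ℕ => (1 - s / b) ^ b) atTop (𝓝 (exp (-s))) := by
    simpa [sub_eq_add_neg, neg_div] using tendsto_one_add_div_pow_exp (-s)
  have hquot := hpow.div (hbase.pow j) (by simp)
  rw [one_pow, div_one] at hquot
  refine hquot.congr' ?_
  filter_upwards [hbase.eventually_ne one_ne_zero, eventually_ge_atTop j] with b hb hbj
  rw [Pi.div_apply, div_eq_iff (pow_ne_zero _ hb), ← pow_add, Nat.sub_add_cancel hbj]

theorem one_sub_div_pow_sub_le_exp {s : ℝ} {b j : ℕ} (hs : 0 < s) (hsb : s ≤ b)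
    (hjb : 2 * j ≤ b) : (1 - s / b) ^ (b - j) ≤ exp (-(s / 2)) := by
  have hb : (0 : ℝ) < b := hs.trans_le hsb
  have hhalf : (b : ℝ) ≤ 2 * ((b - j : ℕ) : ℝ) := by
    exact_mod_cast (by omega : b ≤ 2 * (b - j))
  calc (1 - s / b) ^ (b - j) ≤ exp (-(s / b)) ^ (b - j) := by
        gcongr
        · exact sub_nonneg.2 ((div_le_one hb).2 hsb)
        · linarith [add_one_le_exp (-(s / b))]
    _ = exp (-(((b - j : ℕ) : ℝ) * s / b)) := by rw [← exp_nat_mul]; ring_nf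
    _ ≤ exp (-(s / 2)) := by
        rw [exp_le_exp, neg_le_neg_iff, div_le_div_iff₀ two_pos hb]
        nlinarith

theorem tendsto_choose_div_pow (j : ℕ) :
    Tendsto (fun b : ℕ => (b.choose j : ℝ) / b ^ j) atTop (𝓝 (1 / j.factorial)) := by
  refine ((isEquivalent_choose j).div
    (Asymptotics.IsEquivalent.refl (u := fun b : ℕ => (b : ℝ) ^ j))).tendsto_nhds_iff.2 ?_
  refine tendsto_const_nhds.congr' ?_
  filter_upwards [eventually_ge_atTop 1] with b hb
  have : (b : ℝ) ^ j ≠ 0 := pow_ne_zero _ (by positivity)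
  simp only [Pi.div_apply]
  field_simp

theorem integrableOn_pow_mul_exp_neg_half_mul {p : ℕ} {β : ℝ} (hβ : β < p + 1) (C : ℝ) :
    IntegrableOn (fun s : ℝ => s ^ p * exp (-(s / 2)) * (C * s ^ (-β) + 1)) (Ioi 0) := by
  have h1 := integrableOn_rpow_mul_exp_neg_mul_rpow (s := p - β) (by linarith) one_pos
    (one_half_pos (α := ℝ))
  have h2 := integrableOn_rpow_mul_exp_neg_mul_rpow (s := p) (by linarith) one_pos
    (one_half_pos (α := ℝ))
  refine IntegrableOn.congr_fun ((h1.const_mul C).add h2) (fun s (hs : 0 < s) => ?_)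
    measurableSet_Ioi
  simp only [Pi.add_apply, rpow_one, rpow_sub hs, rpow_natCast, rpow_neg hs.le]
  rw [show -(1 / 2) * s = -(s / 2) by ring]
  ring

theorem integral_Ioi_pow_mul_exp_neg_mul_rpow_neg (p : ℕ) {γ : ℝ} (hγ : γ < p + 1) :
    ∫ s in Ioi 0, s ^ p * exp (-s) * s ^ (-γ) = Gamma (p + 1 - γ) := by
  rw [Gamma_eq_integral (by linarith)]
  refine setIntegral_congr_fun measurableSet_Ioi fun s (hs : 0 < s) => ?_
  rw [← rpow_natCast, mul_right_comm, ← rpow_add hs]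
  ring_nf

theorem setIntegral_Ioc_zero_one_eq_mul_setIntegral_comp_div (f : ℝ → ℝ) {c : ℝ} (hc : 0 < c) :
    ∫ t in Ioc 0 1, f t = c⁻¹ * ∫ s in Ioc 0 c, f (s / c) := by
  rw [← intervalIntegral.integral_of_le zero_le_one, ← intervalIntegral.integral_of_le hc.le,
    intervalIntegral.integral_comp_div f hc.ne', zero_div, div_self hc.ne', smul_eq_mul,
    inv_mul_cancel_left₀ hc.ne']

theorem setIntegral_pow_mul_one_sub_pow_mul_eq (U : ℝ → ℝ) {b : ℕ} (hb : 0 < b)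
    (hU : U (1 / b) ≠ 0) (n m : ℕ) :
    ∫ t in Ioc 0 1, t ^ n * (1 - t) ^ m * U t =
      U (1 / b) / b ^ (n + 1) *
        ∫ s in Ioc 0 (b : ℝ), s ^ n * (1 - s / b) ^ m * (U (s / b) / U (1 / b)) := by
  have hb' : (0 : ℝ) < b := by exact_mod_cast hb
  rw [setIntegral_Ioc_zero_one_eq_mul_setIntegral_comp_div _ hb', ← integral_const_mul,
    ← integral_const_mul]
  congr 1 with s
  rw [div_pow]
  field_simp
  ring

namespace RegularlyVaryingAtZero

variable {U : ℝ → ℝ} {γ β : ℝ}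

theorem eventually_le_rpow_mul (hU : RegularlyVaryingAtZero U (-γ))
    (hpos : ∀ t ∈ Ioc 0 1, 0 < U t) (hanti : AntitoneOn U (Ioc 0 1)) (hβ : 0 ≤ β)
    (hγβ : γ < β) :
    ∀ᶠ ε in 𝓝[>] 0, ∀ s ∈ Ioc 0 1, U (s * ε) ≤ 2 ^ β * s ^ (-β) * U ε := by
  have h2 : (2⁻¹ : ℝ) ^ (-γ) < 2 ^ β := by
    rw [inv_rpow zero_le_two, rpow_neg zero_le_two, inv_inv]
    exact rpow_lt_rpow_of_exponent_lt one_lt_two hγβ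
  have hdbl : ∀ᶠ ε in 𝓝[>] (0 : ℝ), ε ∈ Ioc 0 1 ∧ U (ε / 2) ≤ 2 ^ β * U ε := by
    filter_upwards [Ioc_mem_nhdsGT one_pos,
      (hU 2⁻¹ (by norm_num)).eventually (gt_mem_nhds h2)] with ε hε hlt
    rw [inv_mul_eq_div, div_lt_iff₀ (hpos ε hε)] at hlt
    exact ⟨hε, hlt.le⟩
  obtain ⟨u, hu, hsub⟩ := (nhdsGT_basis 0).mem_iff.1 hdbl
  filter_upwards [Ioo_mem_nhdsGT hu] with ε hε s hs
  have hmem : ∀ x ∈ Ioc 0 ε, x ∈ Ioc 0 1 ∧ U (x / 2) ≤ 2 ^ β * U x :=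
    fun x hx => hsub ⟨hx.1, hx.2.trans_lt hε.2⟩
  exact le_rpow_mul_of_doubling hβ (hanti.mono fun x hx => (hmem x hx).1)
    (fun x hx => (hpos x (hmem x hx).1).le) (fun x hx => (hmem x hx).2) ⟨hε.1, le_rfl⟩ hs

theorem tendsto_ratio_natCast (hU : RegularlyVaryingAtZero U (-γ)) {s : ℝ} (hs : 0 < s) :
    Tendsto (fun b : ℕ => U (s / b) / U (1 / b)) atTop (𝓝 (s ^ (-γ))) := by
  simpa only [mul_one_div, Function.comp_def] using
    (hU s hs).comp tendsto_one_div_natCast_nhdsGT_zero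

theorem eventually_ratio_natCast_le (hU : RegularlyVaryingAtZero U (-γ))
    (hpos : ∀ t ∈ Ioc 0 1, 0 < U t) (hanti : AntitoneOn U (Ioc 0 1)) (hβ : 0 ≤ β)
    (hγβ : γ < β) :
    ∀ᶠ b : ℕ in atTop, ∀ s ∈ Ioc 0 (b : ℝ), U (s / b) / U (1 / b) ≤ 2 ^ β * s ^ (-β) + 1 := by
  filter_upwards [tendsto_one_div_natCast_nhdsGT_zero.eventually
    (hU.eventually_le_rpow_mul hpos hanti hβ hγβ), eventually_ge_atTop 1] with b hpotter hb s hs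
  have hb0 : (0 : ℝ) < b := by exact_mod_cast hb
  have h1b := one_div_natCast_mem_Ioc hb
  have hU1 := hpos _ h1b
  have hC : 0 ≤ 2 ^ β * s ^ (-β) := by have := hs.1; positivity
  rw [div_le_iff₀ hU1]
  rcases le_or_gt s 1 with hs1 | hs1
  · have := hpotter s ⟨hs.1, hs1⟩
    rw [mul_one_div] at this
    nlinarith
  · have : U (s / b) ≤ U (1 / b) :=
      hanti h1b ⟨by have := hs.1; positivity, (div_le_one hb0).2 hs.2⟩
        (div_le_div_of_nonneg_right hs1.le hb0.le)
    nlinarith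

theorem eventually_norm_rescaled_integrand_le (hU : RegularlyVaryingAtZero U (-γ))
    (hpos : ∀ t ∈ Ioc 0 1, 0 < U t) (hanti : AntitoneOn U (Ioc 0 1)) (hβ : 0 ≤ β)
    (hγβ : γ < β) (p j : ℕ) :
    ∀ᶠ b : ℕ in atTop, ∀ s ∈ Ioc 0 (b : ℝ),
      ‖s ^ p * (1 - s / b) ^ (b - j) * (U (s / b) / U (1 / b))‖ ≤
        s ^ p * exp (-(s / 2)) * (2 ^ β * s ^ (-β) + 1) := by
  filter_upwards [hU.eventually_ratio_natCast_le hpos hanti hβ hγβ,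
    eventually_ge_atTop (2 * j)] with b hratio hjb s hs
  have hs0 := hs.1
  have hb : (0 : ℝ) < b := hs0.trans_le hs.2
  have h1 : 0 ≤ 1 - s / b := sub_nonneg.2 ((div_le_one hb).2 hs.2)
  have hR : 0 ≤ U (s / b) / U (1 / b) :=
    (div_pos (hpos _ ⟨by positivity, (div_le_one hb).2 hs.2⟩)
      (hpos _ (one_div_natCast_mem_Ioc (Nat.cast_pos.1 hb)))).le
  rw [norm_of_nonneg (by positivity)]
  gcongr
  · exact one_sub_div_pow_sub_le_exp hs0 hs.2 hjb
  · exact hratio s hs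

theorem tendsto_setIntegral_rescaled (hU : RegularlyVaryingAtZero U (-γ))
    (hmeas : Measurable U) (hpos : ∀ t ∈ Ioc 0 1, 0 < U t) (hanti : AntitoneOn U (Ioc 0 1))
    (hγ : 0 ≤ γ) {p : ℕ} (hγp : γ < p + 1) (j : ℕ) :
    Tendsto (fun b : ℕ =>
        ∫ s in Ioc 0 (b : ℝ), s ^ p * (1 - s / b) ^ (b - j) * (U (s / b) / U (1 / b)))
      atTop (𝓝 (Gamma (p + 1 - γ))) := by
  obtain ⟨β, hγβ, hβp⟩ := exists_between hγp
  set F : ℕ → ℝ → ℝ := fun b => (Ioc 0 (b : ℝ)).indicator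
    fun s => s ^ p * (1 - s / b) ^ (b - j) * (U (s / b) / U (1 / b))
  have hF : ∀ b : ℕ, ∫ s in Ioi 0, F b s = ∫ s in Ioc 0 (b : ℝ),
      s ^ p * (1 - s / b) ^ (b - j) * (U (s / b) / U (1 / b)) := fun b => by
    rw [setIntegral_indicator measurableSet_Ioc, inter_eq_right.2 Ioc_subset_Ioi_self]
  have hmeasF : ∀ b, AEStronglyMeasurable (F b) (volume.restrict (Ioi 0)) := fun b =>
    (Measurable.indicator (by fun_prop) measurableSet_Ioc).aestronglyMeasurable
  have hbound : ∀ᶠ b : ℕ in atTop, ∀ᵐ s ∂volume.restrict (Ioi 0),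
      ‖F b s‖ ≤ s ^ p * exp (-(s / 2)) * (2 ^ β * s ^ (-β) + 1) := by
    filter_upwards [hU.eventually_norm_rescaled_integrand_le hpos hanti (by linarith) hγβ p j]
      with b hb
    filter_upwards [ae_restrict_mem measurableSet_Ioi] with s (hs : 0 < s)
    by_cases hsb : s ∈ Ioc 0 (b : ℝ)
    · simpa only [F, indicator_of_mem hsb] using hb s hsb
    · simp only [F, indicator_of_notMem hsb, norm_zero]
      positivity
  have hlim : ∀ᵐ s ∂volume.restrict (Ioi 0),
      Tendsto (fun b => F b s) atTop (𝓝 (s ^ p * exp (-s) * s ^ (-γ))) := by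
    filter_upwards [ae_restrict_mem measurableSet_Ioi] with s (hs : 0 < s)
    refine ((tendsto_const_nhds.mul (tendsto_one_sub_div_pow_sub s j)).mul
      (hU.tendsto_ratio_natCast hs)).congr' ?_
    filter_upwards [eventually_ge_atTop ⌈s⌉₊] with b hb
    have hsb : s ∈ Ioc 0 (b : ℝ) := ⟨hs, (Nat.le_ceil s).trans (by exact_mod_cast hb)⟩
    simp only [F, indicator_of_mem hsb]
  simpa only [hF, integral_Ioi_pow_mul_exp_neg_mul_rpow_neg p hγp] using
    tendsto_integral_filter_of_dominated_convergence _ (Eventually.of_forall hmeasF) hbound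
      (integrableOn_pow_mul_exp_neg_half_mul (by linarith) _) hlim

theorem tendsto_mul_choose_mul_setIntegral_div (hU : RegularlyVaryingAtZero U (-γ))
    (hmeas : Measurable U) (hpos : ∀ t ∈ Ioc 0 1, 0 < U t) (hanti : AntitoneOn U (Ioc 0 1))
    (hγ : 0 ≤ γ) {j : ℕ} (hj : 1 ≤ j) (hγj : γ < j) :
    Tendsto (fun b : ℕ =>
        j * b.choose j * (∫ t in Ioc 0 1, t ^ (j - 1) * (1 - t) ^ (b - j) * U t) / U (1 / b))
      atTop (𝓝 (j / j.factorial * Gamma (j - γ))) := by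
  have hcast : ((j - 1 : ℕ) : ℝ) + 1 = j := by rw [Nat.cast_sub hj]; ring
  have hI := hU.tendsto_setIntegral_rescaled hmeas hpos hanti hγ (p := j - 1) (by linarith) j
  rw [hcast] at hI
  rw [← mul_one_div]
  refine (((tendsto_choose_div_pow j).const_mul (j : ℝ)).mul hI).congr' ?_
  filter_upwards [eventually_ge_atTop 1] with b hb
  have hb' : (b : ℝ) ≠ 0 := by positivity
  have hU1 : U (1 / b) ≠ 0 := (hpos _ (one_div_natCast_mem_Ioc hb)).ne'
  rw [setIntegral_pow_mul_one_sub_pow_mul_eq U hb hU1, Nat.sub_add_cancel hj]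
  field_simp

end RegularlyVaryingAtZero

theorem MeasureTheory.IntegrableOn.pow_mul_one_sub_pow_mul {V : ℝ → ℝ}
    (hV : IntegrableOn (fun t => t * V t) (Ioc 0 1)) {n : ℕ} (hn : 1 ≤ n) (m : ℕ) :
    IntegrableOn (fun t => t ^ n * (1 - t) ^ m * V t) (Ioc 0 1) := by
  have hbdd : ∀ᵐ t ∂volume.restrict (Ioc (0 : ℝ) 1), ‖t ^ (n - 1) * (1 - t) ^ m‖ ≤ 1 :=
    ae_restrict_of_forall_mem measurableSet_Ioc fun t ht => by
      have h1 : 0 ≤ 1 - t := sub_nonneg.2 ht.2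
      rw [norm_of_nonneg (by have := ht.1; positivity)]
      exact mul_le_one₀ (pow_le_one₀ ht.1.le ht.2) (by positivity)
        (pow_le_one₀ h1 (by linarith [ht.1]))
  refine IntegrableOn.congr_fun (hV.bdd_mul (by fun_prop) hbdd) (fun t _ => ?_)
    measurableSet_Ioc
  conv_rhs => rw [← Nat.sub_add_cancel hn, pow_succ]
  ring

-- `ν [t, 1]` as a real number (`0` where it is infinite).
def measureTail (ν : Measure ℝ) (t : ℝ) : ℝ := (ν (Icc t 1)).toReal

section MeasureTail

variable {ν : Measure ℝ}

theorem measurable_measureTail : Measurable (measureTail ν) :=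
  (Antitone.measurable fun _ _ hxy => measure_mono (Icc_subset_Icc_left hxy)).ennreal_toReal

theorem antitoneOn_measureTail (hfin : ∀ t ∈ Ioc 0 1, ν (Icc t 1) ≠ ⊤) :
    AntitoneOn (measureTail ν) (Ioc 0 1) := fun x hx _ _ hxy =>
  ENNReal.toReal_mono (hfin x hx) (measure_mono (Icc_subset_Icc_left hxy))

theorem lintegral_ofReal_primitive_eq (hν : ∀ᵐ x ∂ν, x ∈ Ioc 0 1)
    (hfin : ∀ t ∈ Ioc 0 1, ν (Icc t 1) ≠ ⊤) {g : ℝ → ℝ} (hg : Continuous g)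
    (hg0 : ∀ t ∈ Icc 0 1, 0 ≤ g t) :
    ∫⁻ x, ENNReal.ofReal (∫ t in 0..x, g t) ∂ν =
      ∫⁻ t in Ioc 0 1, ENNReal.ofReal (g t * measureTail ν t) := by
  -- the layer-cake formula needs a weight that is nonnegative on all of `(0, ∞)`
  have hg' : Continuous fun t => g (min t 1) := hg.comp (continuous_id.min continuous_const)
  have hlayer := lintegral_comp_eq_lintegral_meas_le_mul ν (f := id)
    (by filter_upwards [hν] with x hx using hx.1.le) aemeasurable_id
    (fun t _ => hg'.intervalIntegrable 0 t)
    (ae_restrict_of_forall_mem measurableSet_Ioi fun t (ht : 0 < t) =>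
      hg0 _ ⟨le_min ht.le zero_le_one, min_le_right _ _⟩)
  have hLHS : (fun x => ENNReal.ofReal (∫ t in 0..x, g t)) =ᵐ[ν]
      fun x => ENNReal.ofReal (∫ t in 0..id x, g (min t 1)) := by
    filter_upwards [hν] with x hx
    rw [id, intervalIntegral.integral_congr fun t ht => ?_]
    rw [uIcc_of_le hx.1.le] at ht
    rw [min_eq_left (ht.2.trans hx.2)]
  have hRHS : EqOn (fun t => ν {a | t ≤ id a} * ENNReal.ofReal (g (min t 1)))
      ((Ioc 0 1).indicator fun t => ENNReal.ofReal (g t * measureTail ν t)) (Ioi 0) := by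
    intro t (ht : 0 < t)
    beta_reduce
    by_cases ht1 : t ≤ 1
    · have hset : {a | t ≤ id a} =ᵐ[ν] Icc t 1 := by
        filter_upwards [hν] with a ha
        exact propext ⟨fun h => ⟨h, ha.2⟩, fun h => h.1⟩
      rw [indicator_of_mem (show t ∈ Ioc 0 1 from ⟨ht, ht1⟩), measure_congr hset,
        min_eq_left ht1,
        ENNReal.ofReal_mul (hg0 t ⟨ht.le, ht1⟩), measureTail,
        ENNReal.ofReal_toReal (hfin t ⟨ht, ht1⟩), mul_comm]
    · have hnull : ν {a | t ≤ id a} = 0 :=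
        measure_mono_null (show {a | t ≤ id a} ⊆ {a | a ∉ Ioc 0 1} from
          fun a ha hmem => ht1 (ha.trans hmem.2)) (ae_iff.1 hν)
      rw [indicator_of_notMem (fun h => ht1 h.2), hnull, zero_mul]
  rw [lintegral_congr_ae hLHS, hlayer, setLIntegral_congr_fun measurableSet_Ioi hRHS,
    setLIntegral_indicator measurableSet_Ioc, inter_eq_left.2 Ioc_subset_Ioi_self]

theorem ae_nonneg_primitive (hν : ∀ᵐ x ∂ν, x ∈ Ioc 0 1) {g : ℝ → ℝ}
    (hg0 : ∀ t ∈ Icc 0 1, 0 ≤ g t) : 0 ≤ᵐ[ν] fun x => ∫ t in 0..x, g t := by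
  filter_upwards [hν] with x hx
  exact intervalIntegral.integral_nonneg hx.1.le fun t ht => hg0 t ⟨ht.1, ht.2.trans hx.2⟩

theorem integral_primitive_eq (hν : ∀ᵐ x ∂ν, x ∈ Ioc 0 1)
    (hfin : ∀ t ∈ Ioc 0 1, ν (Icc t 1) ≠ ⊤) {g : ℝ → ℝ} (hg : Continuous g)
    (hg0 : ∀ t ∈ Icc 0 1, 0 ≤ g t) :
    ∫ x, (∫ t in 0..x, g t) ∂ν = ∫ t in Ioc 0 1, g t * measureTail ν t := by
  have hprim := intervalIntegral.continuous_primitive (μ := volume)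
    (fun a b => hg.intervalIntegrable a b) 0
  have hU0 : 0 ≤ᵐ[volume.restrict (Ioc 0 1)] fun t => g t * measureTail ν t :=
    ae_restrict_of_forall_mem measurableSet_Ioc fun t ht =>
      mul_nonneg (hg0 t (Ioc_subset_Icc_self ht)) ENNReal.toReal_nonneg
  rw [integral_eq_lintegral_of_nonneg_ae (ae_nonneg_primitive hν hg0)
      hprim.aestronglyMeasurable, lintegral_ofReal_primitive_eq hν hfin hg hg0,
    integral_eq_lintegral_of_nonneg_ae hU0
      (hg.measurable.mul measurable_measureTail).aestronglyMeasurable]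

theorem integrable_primitive (hν : ∀ᵐ x ∂ν, x ∈ Ioc 0 1)
    (hfin : ∀ t ∈ Ioc 0 1, ν (Icc t 1) ≠ ⊤) {g : ℝ → ℝ} (hg : Continuous g)
    (hg0 : ∀ t ∈ Icc 0 1, 0 ≤ g t)
    (hgU : IntegrableOn (fun t => g t * measureTail ν t) (Ioc 0 1)) :
    Integrable (fun x => ∫ t in 0..x, g t) ν := by
  refine ⟨(intervalIntegral.continuous_primitive (μ := volume)
      (fun a b => hg.intervalIntegrable a b) 0).aestronglyMeasurable,
    (hasFiniteIntegral_iff_ofReal (ae_nonneg_primitive hν hg0)).2 ?_⟩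
  rw [lintegral_ofReal_primitive_eq hν hfin hg hg0]
  exact hgU.lintegral_lt_top

theorem integrableOn_mul_measureTail (hν : ∀ᵐ x ∂ν, x ∈ Ioc 0 1)
    (hfin : ∀ t ∈ Ioc 0 1, ν (Icc t 1) ≠ ⊤)
    (hmom : ∫⁻ r, ENNReal.ofReal (r ^ 2) ∂ν < ⊤) :
    IntegrableOn (fun t => t * measureTail ν t) (Ioc 0 1) := by
  -- `x ^ 2 = ∫ t in 0..x, 2 * t`, so this is the layer-cake form of the second moment
  have h2 : IntegrableOn (fun t => 2 * t * measureTail ν t) (Ioc 0 1) := by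
    have hg0 : ∀ t ∈ Icc (0 : ℝ) 1, 0 ≤ 2 * t := fun t ht => by linarith [ht.1]
    have := measurable_measureTail (ν := ν)
    refine ⟨Measurable.aestronglyMeasurable (by fun_prop),
      (hasFiniteIntegral_iff_ofReal ?_).2 ?_⟩
    · exact ae_restrict_of_forall_mem measurableSet_Ioc fun t ht =>
        mul_nonneg (hg0 t (Ioc_subset_Icc_self ht)) ENNReal.toReal_nonneg
    · rw [← lintegral_ofReal_primitive_eq hν hfin (by fun_prop) hg0]
      have hsq : ∀ x : ℝ, ∫ t in 0..x, 2 * t = x ^ 2 := fun x => by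
        rw [intervalIntegral.integral_const_mul, integral_id]; ring
      simpa only [hsq] using hmom
  simpa [IntegrableOn, mul_assoc] using h2.const_mul (1 / 2)

theorem integral_eq_setIntegral_sub_of_hasDerivAt (hν : ∀ᵐ x ∂ν, x ∈ Ioc 0 1)
    (hfin : ∀ t ∈ Ioc 0 1, ν (Icc t 1) ≠ ⊤) {A P Q : ℝ → ℝ} (hA0 : A 0 = 0)
    (hA : ∀ t, HasDerivAt A (P t - Q t) t) (hP : Continuous P) (hQ : Continuous Q)
    (hP0 : ∀ t ∈ Icc 0 1, 0 ≤ P t) (hQ0 : ∀ t ∈ Icc 0 1, 0 ≤ Q t)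
    (hPU : IntegrableOn (fun t => P t * measureTail ν t) (Ioc 0 1))
    (hQU : IntegrableOn (fun t => Q t * measureTail ν t) (Ioc 0 1)) :
    ∫ x, A x ∂ν =
      (∫ t in Ioc 0 1, P t * measureTail ν t) - ∫ t in Ioc 0 1, Q t * measureTail ν t := by
  have hFTC : ∀ x, A x = (∫ t in 0..x, P t) - ∫ t in 0..x, Q t := fun x => by
    rw [← intervalIntegral.integral_sub (hP.intervalIntegrable _ _) (hQ.intervalIntegrable _ _),
      intervalIntegral.integral_eq_sub_of_hasDerivAt (fun t _ => hA t)
        ((hP.sub hQ).intervalIntegrable _ _), hA0, sub_zero]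
  simp only [hFTC]
  rw [integral_sub (integrable_primitive hν hfin hP hP0 hPU)
      (integrable_primitive hν hfin hQ hQ0 hQU),
    integral_primitive_eq hν hfin hP hP0, integral_primitive_eq hν hfin hQ hQ0]

theorem choose_mul_integral_eq (hν : ∀ᵐ x ∂ν, x ∈ Ioc 0 1)
    (hfin : ∀ t ∈ Ioc 0 1, ν (Icc t 1) ≠ ⊤)
    (hmom : ∫⁻ r, ENNReal.ofReal (r ^ 2) ∂ν < ⊤) {k : ℕ} (hk : 2 ≤ k) (b : ℕ) :
    (b.choose k : ℝ) * ∫ x, x ^ k * (1 - x) ^ (b - k) ∂ν =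
      k * b.choose k * (∫ t in Ioc 0 1, t ^ (k - 1) * (1 - t) ^ (b - k) * measureTail ν t) -
        (k + 1) * b.choose (k + 1) *
          ∫ t in Ioc 0 1, t ^ k * (1 - t) ^ (b - (k + 1)) * measureTail ν t := by
  have hU := integrableOn_mul_measureTail hν hfin hmom
  have hderiv : ∀ t : ℝ, HasDerivAt (fun x => x ^ k * (1 - x) ^ (b - k))
      (k * t ^ (k - 1) * (1 - t) ^ (b - k) - (b - k : ℕ) * t ^ k * (1 - t) ^ (b - (k + 1))) t :=
    fun t => by
      have h := (hasDerivAt_pow k t).mul (((hasDerivAt_id t).const_sub 1).pow (b - k))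
      rw [Nat.sub_sub] at h
      exact h.congr_deriv (by simp only [id, Pi.pow_apply]; ring)
  have hchoose : (b.choose k : ℝ) * (b - k : ℕ) = (k + 1) * b.choose (k + 1) := by
    exact_mod_cast (Nat.choose_succ_right_eq b k).symm.trans (mul_comm _ _)
  have hconst : ∀ (c : ℝ) (f g : ℝ → ℝ), ∫ t in Ioc 0 1, c * f t * g t * measureTail ν t =
      c * ∫ t in Ioc 0 1, f t * g t * measureTail ν t := fun c f g => by
    rw [← integral_const_mul]; simp only [mul_assoc]
  have hnn : ∀ t ∈ Icc (0 : ℝ) 1, 0 ≤ 1 - t := fun t ht => sub_nonneg.2 ht.2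
  rw [integral_eq_setIntegral_sub_of_hasDerivAt hν hfin (by simp [zero_pow (by omega : k ≠ 0)])
    hderiv (by fun_prop) (by fun_prop) (fun t ht => by have := hnn t ht; have := ht.1; positivity)
    (fun t ht => by have := hnn t ht; have := ht.1; positivity)
    (by simpa only [IntegrableOn, mul_assoc] using
      (hU.pow_mul_one_sub_pow_mul (by omega) (b - k)).const_mul (k : ℝ))
    (by simpa only [IntegrableOn, mul_assoc] using
      (hU.pow_mul_one_sub_pow_mul (by omega) (b - (k + 1))).const_mul ((b - k : ℕ) : ℝ)),
    hconst, hconst]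
  linear_combination
    -(∫ t in Ioc 0 1, t ^ k * (1 - t) ^ (b - (k + 1)) * measureTail ν t) * hchoose

end MeasureTail

theorem div_factorial_mul_Gamma_sub_succ {k : ℕ} {γ : ℝ} (hγ : γ ≠ k) :
    k / k.factorial * Gamma (k - γ) - (k + 1) / (k + 1).factorial * Gamma (k + 1 - γ) =
      γ * Gamma (k - γ) / k.factorial := by
  rw [Nat.factorial_succ, add_sub_right_comm, Gamma_add_one (sub_ne_zero.2 hγ.symm)]
  push_cast
  field_simp
  ring

/-- Under Assumption (A), the rate
`α_{b,k} = C(b,k) ∫ x^k (1-x)^{b-k} ν(dx)` at which the block-counting process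
of the `Λ`-coalescent jumps from `b` to `b-k+1` satisfies, for each fixed
`k ≥ 2`, `α_{b,k} / (b^γ L(1/b)) → γ Γ(k-γ)/k!` as `b → ∞`. -/
theorem stmt16
    (ν : Measure ℝ) (hνsupp : ν (Set.Ioc 0 1)ᶜ = 0)
    (hνmom : ∫⁻ r, ENNReal.ofReal (r ^ 2) ∂ν < ⊤)
    (γ : ℝ) (hγ : γ ∈ Set.Ioo (1 : ℝ) 2)
    (L : ℝ → ℝ) (hLpos : ∀ ε ∈ Set.Ioc (0 : ℝ) 1, 0 < L ε)
    (hLslow : ∀ c : ℝ, 0 < c →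
      Tendsto (fun ε => L (c * ε) / L ε) (nhdsWithin 0 (Set.Ioi 0)) (nhds 1))
    (hA : ∀ ε ∈ Set.Ioc (0 : ℝ) 1,
      ν (Set.Icc ε 1) = ENNReal.ofReal (ε ^ (-γ) * L ε))
    (k : ℕ) (hk : 2 ≤ k) :
    Tendsto
      (fun b : ℕ =>
        ((b.choose k : ℝ) * ∫ x, x ^ k * (1 - x) ^ (b - k) ∂ν) /
          ((b : ℝ) ^ γ * L (1 / (b : ℝ))))
      atTop (nhds (γ * Real.Gamma ((k : ℝ) - γ) / (k.factorial : ℝ))) := by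
  obtain ⟨hγ1, hγ2⟩ := hγ
  have hk' : (2 : ℝ) ≤ k := by exact_mod_cast hk
  have hν : ∀ᵐ x ∂ν, x ∈ Ioc 0 1 := ae_iff.2 hνsupp
  have hfin : ∀ t ∈ Ioc 0 1, ν (Icc t 1) ≠ ⊤ := fun t ht => by
    rw [hA t ht]; exact ENNReal.ofReal_ne_top
  have htail : ∀ t ∈ Ioc 0 1, measureTail ν t = t ^ (-γ) * L t := fun t ht => by
    have := hLpos t ht; have := ht.1
    rw [measureTail, hA t ht, ENNReal.toReal_ofReal (by positivity)]
  have hpos : ∀ t ∈ Ioc 0 1, 0 < measureTail ν t := fun t ht => by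
    have := hLpos t ht; have := ht.1
    rw [htail t ht]; positivity
  have hlim : ∀ j : ℕ, k ≤ j → Tendsto (fun b : ℕ => j * b.choose j *
      (∫ t in Ioc 0 1, t ^ (j - 1) * (1 - t) ^ (b - j) * measureTail ν t) / measureTail ν (1 / b))
      atTop (𝓝 (j / j.factorial * Gamma (j - γ))) := fun j hj =>
    (RegularlyVaryingAtZero.of_eq_rpow_mul hLslow htail).tendsto_mul_choose_mul_setIntegral_div
      measurable_measureTail hpos (antitoneOn_measureTail hfin) (by linarith) (by omega)
      (by have : (k : ℝ) ≤ j := (by exact_mod_cast hj); linarith)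
  have hk1 := hlim (k + 1) (by omega)
  simp only [Nat.add_sub_cancel, Nat.cast_add, Nat.cast_one] at hk1
  rw [← div_factorial_mul_Gamma_sub_succ (hγ2.trans_le hk').ne]
  refine ((hlim k le_rfl).sub hk1).congr' ?_
  filter_upwards [eventually_ge_atTop 1] with b hb
  rw [choose_mul_integral_eq hν hfin hνmom hk b, ← sub_div, htail _ (one_div_natCast_mem_Ioc hb),
    one_div, inv_rpow (by positivity), rpow_neg (by positivity), inv_inv]
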